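/- arXiv:2305.17333 — 2 statements merged into one kernel-verified Lean document; each statement's English description precedes it below -/
import Mathlib

section
/- Suppose L is μ-PL (i.e., (1/2)||∇L(θ)||^2 ≥ μ(L(θ) - L*) for all θ) and l-smooth, and the stochastic gradient g satisfies E[g] = ∇L(θ) and E[||g - ∇L(θ)||^2] ≤ (α/B)(L(θ) - L*). Then SGD with step size η = min(1/l, μB/(lα)) satisfies E[L(θ_{t+1})] - L* ≤ (1 - min(μ/(2l), μ^2 B/(2lα))) (E[L(θ_t)] - L*). -/
/-!
Smoothness gives the pointwise bound
`L(θ - η g) ≤ L θ - η ⟪∇L θ, g⟫ + (l/2) η² ‖g‖²`, which together with `L ≥ L*` also makes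
`L(θ - η g)` integrable. Taking expectations, unbiasedness turns the linear term into
`-η ‖∇L θ‖²` and the second moment splits as variance plus `‖∇L θ‖²`. With `l η ≤ 1` the
`‖∇L θ‖²` terms sum to at most `-(η/2) ‖∇L θ‖² ≤ -μ η (L θ - L*)`, while `η l α ≤ μ B` makes
the variance term cost at most half of that, so the suboptimality shrinks by `μ η / 2`.
-/

open MeasureTheory RealInnerProductSpace

section Smooth

variable {E : Type*} [NormedAddCommGroup E] [InnerProductSpace ℝ E] [CompleteSpace E]
  {L : E → ℝ} {l : ℝ}

theorem apply_add_le_of_lipschitz_gradient (hdiff : Differentiable ℝ L)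
    (hlip : ∀ x y, ‖gradient L x - gradient L y‖ ≤ l * ‖x - y‖) (x v : E) :
    L (x + v) ≤ L x + ⟪gradient L x, v⟫ + l / 2 * ‖v‖ ^ 2 := by
  set φ : ℝ → ℝ := fun t => L (x + t • v) - t * ⟪gradient L x, v⟫ - l / 2 * t ^ 2 * ‖v‖ ^ 2
  have hφ : ∀ t, HasDerivAt φ
      (⟪gradient L (x + t • v), v⟫ - ⟪gradient L x, v⟫ - l * t * ‖v‖ ^ 2) t := by
    intro t
    have hline : HasDerivAt (fun t : ℝ => x + t • v) v t := by
      simpa using ((hasDerivAt_id t).smul_const v).const_add x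
    have hL := (hdiff (x + t • v)).hasGradientAt.hasFDerivAt.comp_hasDerivAt t hline
    simp only [Function.comp_def, InnerProductSpace.toDual_apply_apply] at hL
    have hd := (hL.sub (hasDerivAt_mul_const ⟪gradient L x, v⟫)).sub
      (((hasDerivAt_pow 2 t).const_mul (l / 2)).mul_const (‖v‖ ^ 2))
    refine hd.congr_deriv ?_
    push_cast
    ring
  have hφ_nonpos : ∀ t ∈ interior (Set.Ici (0 : ℝ)),
      ⟪gradient L (x + t • v), v⟫ - ⟪gradient L x, v⟫ - l * t * ‖v‖ ^ 2 ≤ 0 := by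
    intro t ht
    rw [interior_Ici, Set.mem_Ioi] at ht
    have hgrad : ‖gradient L (x + t • v) - gradient L x‖ ≤ l * t * ‖v‖ := by
      simpa [norm_smul, abs_of_pos ht, mul_assoc] using hlip (x + t • v) x
    rw [sub_nonpos]
    calc ⟪gradient L (x + t • v), v⟫ - ⟪gradient L x, v⟫
        = ⟪gradient L (x + t • v) - gradient L x, v⟫ := (inner_sub_left _ _ _).symm
      _ ≤ ‖gradient L (x + t • v) - gradient L x‖ * ‖v‖ := real_inner_le_norm _ _
      _ ≤ l * t * ‖v‖ * ‖v‖ := by gcongr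
      _ = l * t * ‖v‖ ^ 2 := by ring
  have hanti : AntitoneOn φ (Set.Ici 0) :=
    antitoneOn_of_hasDerivWithinAt_nonpos (convex_Ici 0)
      (fun t _ => (hφ t).continuousAt.continuousWithinAt)
      (fun t _ => (hφ t).hasDerivWithinAt) hφ_nonpos
  have h01 := hanti Set.self_mem_Ici (Set.mem_Ici.mpr zero_le_one) zero_le_one
  simp only [φ, one_smul, zero_smul, add_zero] at h01
  linarith

theorem apply_sub_smul_le_of_lipschitz_gradient (hdiff : Differentiable ℝ L)
    (hlip : ∀ x y, ‖gradient L x - gradient L y‖ ≤ l * ‖x - y‖) (x v : E) (η : ℝ) :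
    L (x - η • v) ≤ L x - η * ⟪gradient L x, v⟫ + l / 2 * η ^ 2 * ‖v‖ ^ 2 := by
  have h := apply_add_le_of_lipschitz_gradient hdiff hlip x (-(η • v))
  rwa [← sub_eq_add_neg, inner_neg_right, real_inner_smul_right, norm_neg, norm_smul, mul_pow,
    Real.norm_eq_abs, sq_abs, ← sub_eq_add_neg, ← mul_assoc] at h

end Smooth

section Stochastic

variable {E : Type*} [NormedAddCommGroup E] [InnerProductSpace ℝ E]
  {Ω : Type*} [MeasurableSpace Ω] {P : Measure Ω} {g : Ω → E}

theorem integral_norm_sq_eq_integral_norm_sub_integral_sq_add [CompleteSpace E]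
    [IsProbabilityMeasure P] (hg : Integrable g P) (hg2 : Integrable (fun ω => ‖g ω‖ ^ 2) P) :
    ∫ ω, ‖g ω‖ ^ 2 ∂P = ∫ ω, ‖g ω - ∫ ω', g ω' ∂P‖ ^ 2 ∂P + ‖∫ ω, g ω ∂P‖ ^ 2 := by
  set m := ∫ ω, g ω ∂P
  have hexpand : ∀ ω, ‖g ω - m‖ ^ 2 = ‖g ω‖ ^ 2 - 2 * ⟪m, g ω⟫ + ‖m‖ ^ 2 := fun ω => by
    rw [norm_sub_sq_real, real_inner_comm]
  have hinner : Integrable (fun ω => 2 * ⟪m, g ω⟫) P := (hg.const_inner m).const_mul 2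
  simp_rw [hexpand]
  rw [integral_add (f := fun ω => ‖g ω‖ ^ 2 - 2 * ⟪m, g ω⟫) (hg2.sub hinner) (integrable_const _),
    integral_sub hg2 hinner,
    integral_const_mul, integral_inner hg, real_inner_self_eq_norm_sq]
  simp only [integral_const, probReal_univ, one_smul]
  ring

theorem integrable_sub_inner_add_mul_norm_sq [IsFiniteMeasure P] (hg : Integrable g P)
    (hg2 : Integrable (fun ω => ‖g ω‖ ^ 2) P) (a b c : ℝ) (G : E) :
    Integrable (fun ω => a - b * ⟪G, g ω⟫ + c * ‖g ω‖ ^ 2) P :=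
  ((integrable_const a).sub ((hg.const_inner G).const_mul b)).add (hg2.const_mul c)

variable {L : E → ℝ} {l : ℝ}

theorem integrable_comp_sub_smul_of_lipschitz_gradient [CompleteSpace E] [IsFiniteMeasure P]
    (hdiff : Differentiable ℝ L)
    (hlip : ∀ x y, ‖gradient L x - gradient L y‖ ≤ l * ‖x - y‖) {Lstar : ℝ}
    (hstar : ∀ x, Lstar ≤ L x) (hg : Integrable g P) (hg2 : Integrable (fun ω => ‖g ω‖ ^ 2) P)
    (θ : E) (η : ℝ) :
    Integrable (fun ω => L (θ - η • g ω)) P :=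
  integrable_of_le_of_le
    (hdiff.continuous.comp_aestronglyMeasurable
      (aestronglyMeasurable_const.sub (hg.aestronglyMeasurable.const_smul η)))
    (ae_of_all P fun _ => hstar _)
    (ae_of_all P fun ω => apply_sub_smul_le_of_lipschitz_gradient hdiff hlip θ (g ω) η)
    (integrable_const Lstar) (integrable_sub_inner_add_mul_norm_sq hg hg2 _ _ _ _)

theorem integral_comp_sub_smul_le_of_lipschitz_gradient [CompleteSpace E]
    [IsProbabilityMeasure P] (hdiff : Differentiable ℝ L)
    (hlip : ∀ x y, ‖gradient L x - gradient L y‖ ≤ l * ‖x - y‖) (hg : Integrable g P)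
    (hg2 : Integrable (fun ω => ‖g ω‖ ^ 2) P) (θ : E) (η : ℝ)
    (hLint : Integrable (fun ω => L (θ - η • g ω)) P) :
    ∫ ω, L (θ - η • g ω) ∂P ≤
      L θ - η * ⟪gradient L θ, ∫ ω, g ω ∂P⟫ + l / 2 * η ^ 2 * ∫ ω, ‖g ω‖ ^ 2 ∂P := by
  calc ∫ ω, L (θ - η • g ω) ∂P
      ≤ ∫ ω, (L θ - η * ⟪gradient L θ, g ω⟫ + l / 2 * η ^ 2 * ‖g ω‖ ^ 2) ∂P :=
        integral_mono hLint (integrable_sub_inner_add_mul_norm_sq hg hg2 _ _ _ _)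
          fun ω => apply_sub_smul_le_of_lipschitz_gradient hdiff hlip θ (g ω) η
    _ = _ := by
      rw [integral_add (f := fun ω => L θ - η * ⟪gradient L θ, g ω⟫)
          ((integrable_const _).sub ((hg.const_inner _).const_mul _)) (hg2.const_mul _),
        integral_sub (integrable_const _) ((hg.const_inner _).const_mul _), integral_const_mul,
        integral_const_mul, integral_inner hg]
      simp

end Stochastic

theorem sgd_pl_decrease_le {l μ α B η Δ s V : ℝ} (hl : 0 ≤ l) (hB : 0 < B) (hη : 0 ≤ η)
    (hηl : l * η ≤ 1) (hηα : η * (l * α) ≤ μ * B) (hΔ : 0 ≤ Δ) (hs : 0 ≤ s)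
    (hPL : μ * Δ ≤ 1 / 2 * s) (hV : V ≤ α / B * Δ) :
    -(η * s) + l / 2 * η ^ 2 * (V + s) ≤ -(μ / 2 * η * Δ) := by
  have hgrad : l / 2 * η ^ 2 * s ≤ η / 2 * s := by nlinarith [mul_nonneg hη hs]
  have hvar : l / 2 * η ^ 2 * V ≤ μ / 2 * η * Δ :=
    calc l / 2 * η ^ 2 * V ≤ l / 2 * η ^ 2 * (α / B * Δ) := by gcongr
      _ = η * Δ / (2 * B) * (η * (l * α)) := by field_simp
      _ ≤ η * Δ / (2 * B) * (μ * B) := by gcongr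
      _ = μ / 2 * η * Δ := by field_simp
  nlinarith [mul_le_mul_of_nonneg_left hPL hη]

theorem stmt7_general {d : ℕ} {Ω : Type*} [MeasurableSpace Ω] (P : Measure Ω)
    [IsProbabilityMeasure P]
    (L : EuclideanSpace ℝ (Fin d) → ℝ) (l μpl α B Lstar : ℝ)
    (hl : 0 < l) (hμ : 0 < μpl) (hα : 0 < α) (hB : 0 < B)
    (hstar : ∀ x, Lstar ≤ L x)
    (hdiff : Differentiable ℝ L)
    (hlip : ∀ x y, ‖gradient L x - gradient L y‖ ≤ l * ‖x - y‖)
    (hPL : ∀ x, μpl * (L x - Lstar) ≤ (1 / 2) * ‖gradient L x‖ ^ 2)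
    (θ : EuclideanSpace ℝ (Fin d)) (g : Ω → EuclideanSpace ℝ (Fin d))
    (hgint : Integrable g P)
    (hg2 : Integrable (fun ω => ‖g ω‖ ^ 2) P)
    (hmean : (∫ ω, g ω ∂P) = gradient L θ)
    (hvar : (∫ ω, ‖g ω - gradient L θ‖ ^ 2 ∂P) ≤ (α / B) * (L θ - Lstar)) :
    (∫ ω, L (θ - min (1 / l) (μpl * B / (l * α)) • g ω) ∂P) - Lstar ≤
      (1 - min (μpl / (2 * l)) (μpl ^ 2 * B / (2 * l * α))) * (L θ - Lstar) := by
  set η := min (1 / l) (μpl * B / (l * α))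
  have hη : 0 < η := lt_min (by positivity) (by positivity)
  have hηl : l * η ≤ 1 := by
    rw [mul_comm]; exact (le_div_iff₀ hl).mp (min_le_left _ _)
  have hηα : η * (l * α) ≤ μpl * B := (le_div_iff₀ (by positivity)).mp (min_le_right _ _)
  have hrate : min (μpl / (2 * l)) (μpl ^ 2 * B / (2 * l * α)) = μpl / 2 * η := by
    rw [mul_min_of_nonneg _ _ (by positivity : (0 : ℝ) ≤ μpl / 2)]
    congr 1 <;> field_simp
  have hstep := integral_comp_sub_smul_le_of_lipschitz_gradient hdiff hlip hgint hg2 θ η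
    (integrable_comp_sub_smul_of_lipschitz_gradient hdiff hlip hstar hgint hg2 θ η)
  rw [integral_norm_sq_eq_integral_norm_sub_integral_sq_add hgint hg2, hmean,
    real_inner_self_eq_norm_sq] at hstep
  have hdecrease := sgd_pl_decrease_le hl.le hB hη.le hηl hηα (sub_nonneg.mpr (hstar θ))
    (sq_nonneg _) (hPL θ) hvar
  rw [hrate]
  linarith

/-- One step of SGD under the PL inequality: if `L` is `μ`-PL and `l`-smooth, the
stochastic gradient `g` is unbiased with `E[‖g - ∇L(θ)‖²] ≤ (α/B)(L(θ) - L*)`, then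
SGD with step size `η = min(1/l, μB/(lα))` contracts the expected suboptimality by
the factor `1 - min(μ/(2l), μ²B/(2lα))`. -/
theorem stmt7 {d : ℕ} {Ω : Type*} [MeasurableSpace Ω] (P : Measure Ω)
    [IsProbabilityMeasure P]
    (L : EuclideanSpace ℝ (Fin d) → ℝ) (l μpl α B Lstar : ℝ)
    (hl : 0 < l) (hμ : 0 < μpl) (hα : 0 < α) (hB : 0 < B)
    (hstar : ∀ x, Lstar ≤ L x)
    (hdiff : Differentiable ℝ L)
    (hlip : ∀ x y, ‖gradient L x - gradient L y‖ ≤ l * ‖x - y‖)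
    (hPL : ∀ x, μpl * (L x - Lstar) ≤ (1 / 2) * ‖gradient L x‖ ^ 2)
    (θ : EuclideanSpace ℝ (Fin d)) (g : Ω → EuclideanSpace ℝ (Fin d))
    (hgint : Integrable g P)
    (hg2 : Integrable (fun ω => ‖g ω‖ ^ 2) P)
    (hLint : Integrable (fun ω => L (θ - min (1 / l) (μpl * B / (l * α)) • g ω)) P)
    (hmean : (∫ ω, g ω ∂P) = gradient L θ)
    (hvar : (∫ ω, ‖g ω - gradient L θ‖ ^ 2 ∂P) ≤ (α / B) * (L θ - Lstar)) :
    (∫ ω, L (θ - min (1 / l) (μpl * B / (l * α)) • g ω) ∂P) - Lstar ≤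
      (1 - min (μpl / (2 * l)) (μpl ^ 2 * B / (2 * l * α))) * (L θ - Lstar) :=
  stmt7_general P L l μpl α B Lstar hl hμ hα hB hstar hdiff hlip hPL θ g hgint hg2 hmean hvar
end

section
/- Dimension-free descent: Suppose L is twice differentiable and there is a matrix H with ∇²L(θ') ⪯ H for all θ' on the segment between θ_t and θ_{t+1}, with ||H||_op ≤ l and tr(H) ≤ l·r. If g is a random vector with E[g] = ∇L(θ_t) and E[g g^T] = ((n+1)/n)(∇L ∇L^T + Σ) + (1/n)(||∇L||² + tr(Σ)) I for a PSD matrix Σ, then for θ_{t+1} = θ_t - η g: E[L(θ_{t+1})] - L(θ_t) ≤ -η||∇L(θ_t)||² + (η²/2)·((r+n+1)/n)·l·(||∇L(θ_t)||² + tr(Σ)). -/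
/-!
Taylor's theorem along the segment from `θ` to `θ - η g` bounds `L (θ - η g)` pointwise by
`L θ - η ⟪∇L θ, g⟫ + (η²/2) gᵀ H g`. Taking expectations, the linear term becomes `-η ‖∇L θ‖²`
and `E[gᵀ H g] = tr (H E[g gᵀ])`. Under the n-SPSA second moment this trace is
`((n+1)/n) (∇Lᵀ H ∇L + tr (H Σ)) + (1/n) (‖∇L‖² + tr Σ) tr H`; the first two terms are at most
`l ‖∇L‖²` and `l tr Σ` because `‖H‖_op ≤ l` (for `tr (H Σ)` write `Σ = Bᵀ B` and bound
row by row), and `tr H ≤ l r`, which gives the dimension-free factor `(r + n + 1) / n`.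
-/

open MeasureTheory Matrix Set

theorem le_add_deriv_add_half_of_secondDeriv_le {φ φ' φ'' : ℝ → ℝ} {C : ℝ}
    (hφ : ∀ t, HasDerivAt φ (φ' t) t) (hφ' : ∀ t, HasDerivAt φ' (φ'' t) t)
    (hC : ∀ t ∈ Icc (0 : ℝ) 1, φ'' t ≤ C) : φ 1 ≤ φ 0 + φ' 0 + C / 2 := by
  have hψ : AntitoneOn (fun t => φ' t - C * t) (Icc 0 1) := by
    refine antitoneOn_of_hasDerivWithinAt_nonpos (convex_Icc 0 1)
      (fun t _ => ((hφ' t).sub ((hasDerivAt_id t).const_mul C)).continuousAt.continuousWithinAt)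
      (fun t _ => ((hφ' t).sub ((hasDerivAt_id t).const_mul C)).hasDerivWithinAt) ?_
    rw [interior_Icc]
    intro t ht
    linarith [hC t (Ioo_subset_Icc_self ht)]
  have hχ : AntitoneOn (fun t => φ t - φ' 0 * t - C * t ^ 2 / 2) (Icc 0 1) := by
    have hd : ∀ t, HasDerivAt (fun t => φ t - φ' 0 * t - C * t ^ 2 / 2)
        (φ' t - φ' 0 - C * t) t := fun t =>
      (((hφ t).sub ((hasDerivAt_id' t).const_mul (φ' 0))).sub
        (((hasDerivAt_pow 2 t).const_mul C).div_const 2)).congr_deriv (by ring)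
    refine antitoneOn_of_hasDerivWithinAt_nonpos (convex_Icc 0 1)
      (fun t _ => (hd t).continuousAt.continuousWithinAt)
      (fun t _ => (hd t).hasDerivWithinAt) ?_
    rw [interior_Icc]
    intro t ht
    have := hψ (left_mem_Icc.2 zero_le_one) (Ioo_subset_Icc_self ht) ht.1.le
    simp only at this
    linarith
  have := hχ (left_mem_Icc.2 zero_le_one) (right_mem_Icc.2 zero_le_one) zero_le_one
  simp only at this
  linarith

section Taylor

variable {E : Type*} [NormedAddCommGroup E] [NormedSpace ℝ E]

theorem ContDiff.hasDerivAt_fderiv_add_smul_apply {L : E → ℝ} (hL : ContDiff ℝ 2 L) (θ v : E)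
    (t : ℝ) : HasDerivAt (fun s : ℝ => fderiv ℝ L (θ + s • v) v)
      (iteratedFDeriv ℝ 2 L (θ + t • v) ![v, v]) t := by
  have hline : HasDerivAt (fun s : ℝ => θ + s • v) v t := by
    simpa using ((hasDerivAt_id t).smul_const v).const_add θ
  have hD : Differentiable ℝ (fderiv ℝ L) :=
    (hL.fderiv_right (m := 1) (by norm_num)).differentiable one_ne_zero
  rw [iteratedFDeriv_two_apply]
  simpa using (((hD _).hasFDerivAt.comp_hasDerivAt t hline).clm_apply (hasDerivAt_const t v))

theorem ContDiff.le_add_fderiv_add_half_of_iteratedFDeriv_le {L : E → ℝ} (hL : ContDiff ℝ 2 L)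
    {θ v : E} {C : ℝ} (hC : ∀ θ' ∈ segment ℝ θ (θ + v), iteratedFDeriv ℝ 2 L θ' ![v, v] ≤ C) :
    L (θ + v) ≤ L θ + fderiv ℝ L θ v + C / 2 := by
  have hline : ∀ t : ℝ, HasDerivAt (fun s : ℝ => θ + s • v) v t := fun t => by
    simpa using ((hasDerivAt_id t).smul_const v).const_add θ
  have hdiff : Differentiable ℝ L := hL.differentiable (by norm_num)
  have := le_add_deriv_add_half_of_secondDeriv_le
    (fun t => (hdiff _).hasFDerivAt.comp_hasDerivAt t (hline t))
    (hL.hasDerivAt_fderiv_add_smul_apply θ v)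
    (fun t ht => hC _ (by rw [segment_eq_image']; exact ⟨t, ht, by simp⟩))
  simpa using this

end Taylor

theorem le_sub_inner_gradient_add_of_hessian_le {ι : Type*} [Fintype ι]
    {L : EuclideanSpace ℝ ι → ℝ} (hL : ContDiff ℝ 2 L) {θ u : EuclideanSpace ℝ ι} {η : ℝ}
    {H : Matrix ι ι ℝ} (hH : ∀ θ' ∈ segment ℝ θ (θ - η • u), ∀ w : EuclideanSpace ℝ ι,
      iteratedFDeriv ℝ 2 L θ' ![w, w] ≤ (fun k => w k) ⬝ᵥ H *ᵥ fun k => w k) :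
    L (θ - η • u) ≤
      L θ - η * inner ℝ (gradient L θ) u + η ^ 2 / 2 * ((fun k => u k) ⬝ᵥ H *ᵥ fun k => u k) := by
  have hq : ((fun k => (-(η • u)) k) ⬝ᵥ H *ᵥ fun k => (-(η • u)) k)
      = η ^ 2 * ((fun k => u k) ⬝ᵥ H *ᵥ fun k => u k) := by
    have : (fun k => (-(η • u)) k) = (-η) • fun k => u k := by
      funext k
      simp
    rw [this, smul_dotProduct, mulVec_smul, dotProduct_smul, smul_eq_mul, smul_eq_mul]
    ring
  have := hL.le_add_fderiv_add_half_of_iteratedFDeriv_le (θ := θ) (v := -(η • u)) fun θ' hθ' =>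
    (hH θ' (by rwa [← sub_eq_add_neg] at hθ') _).trans_eq hq
  rw [← sub_eq_add_neg, ← InnerProductSpace.toDual_symm_apply, inner_neg_right,
    real_inner_smul_right] at this
  unfold gradient
  linarith

section QuadraticForm

variable {ι : Type*} [Fintype ι]

theorem Matrix.dotProduct_mulVec_le_mul_dotProduct_self {H : Matrix ι ι ℝ} {l : ℝ}
    (hl : 0 ≤ l) (hH : ∀ w : ι → ℝ, H *ᵥ w ⬝ᵥ H *ᵥ w ≤ l ^ 2 * (w ⬝ᵥ w)) (w : ι → ℝ) :
    w ⬝ᵥ H *ᵥ w ≤ l * (w ⬝ᵥ w) := by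
  have hww : 0 ≤ w ⬝ᵥ w := by
    simp only [dotProduct, ← sq]
    positivity
  have hcs : (w ⬝ᵥ H *ᵥ w) ^ 2 ≤ (w ⬝ᵥ w) * (H *ᵥ w ⬝ᵥ H *ᵥ w) := by
    simpa only [dotProduct, ← sq] using Finset.sum_mul_sq_le_sq_mul_sq Finset.univ w (H *ᵥ w)
  refine le_of_sq_le_sq (hcs.trans ?_) (by positivity)
  calc (w ⬝ᵥ w) * (H *ᵥ w ⬝ᵥ H *ᵥ w) ≤ (w ⬝ᵥ w) * (l ^ 2 * (w ⬝ᵥ w)) := by gcongr; exact hH w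
    _ = (l * (w ⬝ᵥ w)) ^ 2 := by ring

open scoped MatrixOrder in
theorem Matrix.PosSemidef.trace_mul_le [DecidableEq ι] {H S : Matrix ι ι ℝ} (hS : S.PosSemidef)
    {l : ℝ} (hl : 0 ≤ l) (hH : ∀ w : ι → ℝ, H *ᵥ w ⬝ᵥ H *ᵥ w ≤ l ^ 2 * (w ⬝ᵥ w)) :
    (H * S).trace ≤ l * S.trace := by
  obtain ⟨B, rfl⟩ := CStarAlgebra.nonneg_iff_eq_star_mul_self.mp hS.nonneg
  have hrow : ∀ A : Matrix ι ι ℝ, (B * A * star B).trace = ∑ i, B i ⬝ᵥ A *ᵥ B i := by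
    intro A
    refine Finset.sum_congr rfl fun i _ => ?_
    simp only [diag_apply, mul_apply, star_apply, dotProduct, mulVec, Finset.mul_sum,
      Finset.sum_mul, star_trivial]
    rw [Finset.sum_comm]
    exact Finset.sum_congr rfl fun j _ => Finset.sum_congr rfl fun k _ => by ring
  calc (H * (star B * B)).trace = (B * H * star B).trace := by
        rw [← mul_assoc, trace_mul_comm, mul_assoc]
    _ = ∑ i, B i ⬝ᵥ H *ᵥ B i := hrow H
    _ ≤ ∑ i, l * (B i ⬝ᵥ B i) := Finset.sum_le_sum fun i _ =>
        dotProduct_mulVec_le_mul_dotProduct_self hl hH (B i)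
    _ = l * (B * 1 * star B).trace := by simp only [hrow 1, one_mulVec, Finset.mul_sum]
    _ = l * (star B * B).trace := by rw [mul_one, trace_mul_comm]

theorem Matrix.trace_mul_vecMulVec_self (H : Matrix ι ι ℝ) (v : ι → ℝ) :
    (H * vecMulVec v v).trace = v ⬝ᵥ H *ᵥ v := by
  rw [mul_vecMulVec, trace_vecMulVec, dotProduct_comm]

/-- The second moment `E[g gᵀ]` of the n-SPSA gradient estimate with mean `v` and
covariance `S`. -/
noncomputable def Matrix.spsaSecondMoment [DecidableEq ι] (n : ℝ) (v : ι → ℝ) (S : Matrix ι ι ℝ) :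
    Matrix ι ι ℝ :=
  ((n + 1) / n) • (vecMulVec v v + S) + ((1 / n) * (v ⬝ᵥ v + S.trace)) • 1

theorem Matrix.trace_mul_spsaSecondMoment_le [DecidableEq ι] {H S : Matrix ι ι ℝ} {l r n : ℝ}
    (hl : 0 ≤ l) (hH : ∀ w : ι → ℝ, H *ᵥ w ⬝ᵥ H *ᵥ w ≤ l ^ 2 * (w ⬝ᵥ w))
    (hHtr : H.trace ≤ l * r) (hS : S.PosSemidef) (hn : 0 < n) (v : ι → ℝ) :
    (H * spsaSecondMoment n v S).trace ≤ (r + n + 1) / n * l * (v ⬝ᵥ v + S.trace) := by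
  have hv : 0 ≤ v ⬝ᵥ v := by
    simp only [dotProduct, ← sq]
    positivity
  have hb : 0 ≤ 1 / n * (v ⬝ᵥ v + S.trace) := by
    have := hS.trace_nonneg
    positivity
  rw [spsaSecondMoment, mul_add, Matrix.mul_smul, Matrix.mul_smul, mul_add, trace_add,
    trace_smul, trace_smul, trace_add, mul_one, trace_mul_vecMulVec_self, smul_eq_mul,
    smul_eq_mul]
  calc (n + 1) / n * (v ⬝ᵥ H *ᵥ v + (H * S).trace) + 1 / n * (v ⬝ᵥ v + S.trace) * H.trace
      ≤ (n + 1) / n * (l * (v ⬝ᵥ v) + l * S.trace) + 1 / n * (v ⬝ᵥ v + S.trace) * (l * r) := by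
        gcongr
        · exact dotProduct_mulVec_le_mul_dotProduct_self hl hH v
        · exact hS.trace_mul_le hl hH
    _ = (r + n + 1) / n * l * (v ⬝ᵥ v + S.trace) := by field_simp; ring

end QuadraticForm

section SecondMoment

variable {ι Ω : Type*} [Fintype ι] [MeasurableSpace Ω] {P : Measure Ω}

theorem Matrix.dotProduct_mulVec_self_eq_sum (H : Matrix ι ι ℝ) (x : ι → ℝ) :
    x ⬝ᵥ H *ᵥ x = ∑ i, ∑ j, H i j * (x j * x i) := by
  simp only [dotProduct, mulVec, Finset.mul_sum]
  exact Finset.sum_congr rfl fun i _ => Finset.sum_congr rfl fun j _ => by ring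

theorem integrable_dotProduct_mulVec (H : Matrix ι ι ℝ) {x : Ω → ι → ℝ}
    (hx : ∀ i j, Integrable (fun ω => x ω i * x ω j) P) :
    Integrable (fun ω => x ω ⬝ᵥ H *ᵥ x ω) P := by
  simp only [dotProduct_mulVec_self_eq_sum]
  exact integrable_finsetSum _ fun i _ => integrable_finsetSum _ fun j _ => (hx j i).const_mul _

theorem integral_dotProduct_mulVec (H : Matrix ι ι ℝ) {x : Ω → ι → ℝ}
    (hx : ∀ i j, Integrable (fun ω => x ω i * x ω j) P) :
    ∫ ω, x ω ⬝ᵥ H *ᵥ x ω ∂P = (H * of fun i j => ∫ ω, x ω i * x ω j ∂P).trace := by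
  simp only [dotProduct_mulVec_self_eq_sum, trace, diag_apply, mul_apply, of_apply]
  rw [integral_finsetSum]
  · refine Finset.sum_congr rfl fun i _ => ?_
    rw [integral_finsetSum]
    · exact Finset.sum_congr rfl fun j _ => integral_const_mul _ _
    · exact fun j _ => (hx j i).const_mul _
  · exact fun i _ => integrable_finsetSum _ fun j _ => (hx j i).const_mul _

theorem EuclideanSpace.integrable_apply_mul_apply {x : Ω → EuclideanSpace ℝ ι}
    (hx : AEStronglyMeasurable x P) (hx2 : Integrable (fun ω => ‖x ω‖ ^ 2) P) (i j : ι) :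
    Integrable (fun ω => x ω i * x ω j) P := by
  have hcoord : ∀ k, AEStronglyMeasurable (fun ω => x ω k) P := fun k =>
    (EuclideanSpace.proj (𝕜 := ℝ) k).continuous.comp_aestronglyMeasurable hx
  refine hx2.mono' ((hcoord i).mul (hcoord j)) (Filter.Eventually.of_forall fun ω => ?_)
  rw [norm_mul, sq]
  exact mul_le_mul (PiLp.norm_apply_le _ i) (PiLp.norm_apply_le _ j) (norm_nonneg _)
    (norm_nonneg _)

end SecondMoment

theorem EuclideanSpace.norm_sq_eq_dotProduct {ι : Type*} [Fintype ι] (x : EuclideanSpace ℝ ι) :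
    ‖x‖ ^ 2 = (fun k => x k) ⬝ᵥ (fun k => x k) := by
  rw [← real_inner_self_eq_norm_sq, EuclideanSpace.inner_eq_star_dotProduct]
  rfl

theorem stmt10_general {d : ℕ} {Ω : Type*} [MeasurableSpace Ω] (P : Measure Ω)
    [IsProbabilityMeasure P]
    (L : EuclideanSpace ℝ (Fin d) → ℝ) (hL : ContDiff ℝ 2 L)
    (l r η : ℝ) (hl : 0 ≤ l) (n : ℕ) (hn : 0 < n)
    (θ : EuclideanSpace ℝ (Fin d)) (g : Ω → EuclideanSpace ℝ (Fin d))
    (H Sig : Matrix (Fin d) (Fin d) ℝ) (hSig : Sig.PosSemidef)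
    (hHub : ∀ ω, ∀ θ' ∈ segment ℝ θ (θ - η • g ω), ∀ w : EuclideanSpace ℝ (Fin d),
      iteratedFDeriv ℝ 2 L θ' ![w, w] ≤ (fun k => w k) ⬝ᵥ H.mulVec fun k => w k)
    (hHop : ∀ w : Fin d → ℝ, H.mulVec w ⬝ᵥ H.mulVec w ≤ l ^ 2 * (w ⬝ᵥ w))
    (hHtr : H.trace ≤ l * r)
    (hgint : Integrable g P)
    (hg2 : Integrable (fun ω => ‖g ω‖ ^ 2) P)
    (hLint : Integrable (fun ω => L (θ - η • g ω)) P)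
    (hmean : (∫ ω, g ω ∂P) = gradient L θ)
    (hsecond : (Matrix.of fun i j => ∫ ω, g ω i * g ω j ∂P) =
      (((n : ℝ) + 1) / n) •
          (vecMulVec (fun k => gradient L θ k) (fun k => gradient L θ k) + Sig) +
        ((1 / (n : ℝ)) * (‖gradient L θ‖ ^ 2 + Sig.trace)) •
          (1 : Matrix (Fin d) (Fin d) ℝ)) :
    (∫ ω, L (θ - η • g ω) ∂P) - L θ ≤
      -η * ‖gradient L θ‖ ^ 2 +
        η ^ 2 / 2 * ((r + n + 1) / n) * l * (‖gradient L θ‖ ^ 2 + Sig.trace) := by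
  set G := gradient L θ
  set q : Ω → ℝ := fun ω => (fun k => g ω k) ⬝ᵥ H *ᵥ fun k => g ω k
  have hprod := EuclideanSpace.integrable_apply_mul_apply hgint.aestronglyMeasurable hg2
  have hinner : Integrable (fun ω => inner ℝ G (g ω)) P := (innerSL ℝ G).integrable_comp hgint
  have hqint : Integrable q P := integrable_dotProduct_mulVec H hprod
  have hlin : Integrable (fun ω => L θ - η * inner ℝ G (g ω)) P :=
    (integrable_const _).sub (hinner.const_mul η)
  have hmean_inner : ∫ ω, inner ℝ G (g ω) ∂P = ‖G‖ ^ 2 := by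
    rw [integral_inner hgint, hmean, real_inner_self_eq_norm_sq]
  have hq : ∫ ω, q ω ∂P ≤ (r + n + 1) / n * l * (‖G‖ ^ 2 + Sig.trace) := by
    rw [integral_dotProduct_mulVec H hprod, hsecond, EuclideanSpace.norm_sq_eq_dotProduct]
    exact trace_mul_spsaSecondMoment_le hl hHop hHtr hSig (by positivity) _
  calc (∫ ω, L (θ - η • g ω) ∂P) - L θ
      ≤ (∫ ω, L θ - η * inner ℝ G (g ω) + η ^ 2 / 2 * q ω ∂P) - L θ :=
        sub_le_sub_right (integral_mono hLint (hlin.add (hqint.const_mul _))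
          fun ω => le_sub_inner_gradient_add_of_hessian_le hL (hHub ω)) _
    _ = -η * ‖G‖ ^ 2 + η ^ 2 / 2 * ∫ ω, q ω ∂P := by
        rw [integral_add hlin (hqint.const_mul _), integral_sub (integrable_const _)
          (hinner.const_mul η), integral_const_mul, integral_const_mul, hmean_inner]
        simp only [integral_const, probReal_univ, smul_eq_mul, one_mul]
        ring
    _ ≤ _ := by
        rw [mul_assoc (η ^ 2 / 2), mul_assoc (η ^ 2 / 2)]
        gcongr

/-- Dimension-free descent: if the Hessian of `L` on the segment between iterates is
bounded above by a matrix `H` with `‖H‖_op ≤ l` and `tr H ≤ l·r`, and `g` is a random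
vector with `E[g] = ∇L(θ)` and second moment
`E[g gᵀ] = ((n+1)/n)(∇L ∇Lᵀ + Σ) + (1/n)(‖∇L‖² + tr Σ) I` for a PSD matrix `Σ`,
then the step `θ' = θ - η g` satisfies
`E[L(θ')] - L(θ) ≤ -η ‖∇L(θ)‖² + (η²/2)((r+n+1)/n) l (‖∇L(θ)‖² + tr Σ)`. -/
theorem stmt10 {d : ℕ} {Ω : Type*} [MeasurableSpace Ω] (P : Measure Ω)
    [IsProbabilityMeasure P]
    (L : EuclideanSpace ℝ (Fin d) → ℝ) (hL : ContDiff ℝ 2 L)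
    (l r η : ℝ) (hl : 0 ≤ l) (hη : 0 ≤ η) (n : ℕ) (hn : 0 < n)
    (θ : EuclideanSpace ℝ (Fin d)) (g : Ω → EuclideanSpace ℝ (Fin d))
    (H Sig : Matrix (Fin d) (Fin d) ℝ) (hSig : Sig.PosSemidef)
    (hHub : ∀ ω, ∀ θ' ∈ segment ℝ θ (θ - η • g ω), ∀ w : EuclideanSpace ℝ (Fin d),
      iteratedFDeriv ℝ 2 L θ' ![w, w] ≤ (fun k => w k) ⬝ᵥ H.mulVec fun k => w k)
    (hHop : ∀ w : Fin d → ℝ, H.mulVec w ⬝ᵥ H.mulVec w ≤ l ^ 2 * (w ⬝ᵥ w))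
    (hHtr : H.trace ≤ l * r)
    (hgint : Integrable g P)
    (hg2 : Integrable (fun ω => ‖g ω‖ ^ 2) P)
    (hLint : Integrable (fun ω => L (θ - η • g ω)) P)
    (hmean : (∫ ω, g ω ∂P) = gradient L θ)
    (hsecond : (Matrix.of fun i j => ∫ ω, g ω i * g ω j ∂P) =
      (((n : ℝ) + 1) / n) •
          (vecMulVec (fun k => gradient L θ k) (fun k => gradient L θ k) + Sig) +
        ((1 / (n : ℝ)) * (‖gradient L θ‖ ^ 2 + Sig.trace)) •
          (1 : Matrix (Fin d) (Fin d) ℝ)) :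
    (∫ ω, L (θ - η • g ω) ∂P) - L θ ≤
      -η * ‖gradient L θ‖ ^ 2 +
        η ^ 2 / 2 * ((r + n + 1) / n) * l * (‖gradient L θ‖ ^ 2 + Sig.trace) :=
  stmt10_general P L hL l r η hl n hn θ g H Sig hSig hHub hHop hHtr hgint hg2 hLint hmean hsecond
end
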